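/- arXiv:2006.06970 — 3 statements merged into one kernel-verified Lean document; each statement's English description precedes it below -/
import Mathlib

section
/- Let U be a finite composition of the Wythoff functions A(n)=⌊nφ⌋ and B(n)=⌊nφ²⌋, containing i occurrences of A and j occurrences of B. Then there is an integer constant λ_U such that U(n) = F_{i+2j}·A(n) + F_{i+2j-1}·n − λ_U for all n ≥ 1. -/
noncomputable def phi : ℝ := (1 + Real.sqrt 5) / 2

/-- Lower Wythoff sequence. -/
noncomputable def A (n : ℕ) : ℕ := (⌊(n : ℝ) * phi⌋).toNat

/-- Upper Wythoff sequence. -/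
noncomputable def B (n : ℕ) : ℕ := (⌊(n : ℝ) * phi ^ 2⌋).toNat

/-- `d` is the digit sequence of the Zeckendorf expansion of `N`:
digits are 0/1, no two consecutive 1's, finitely many nonzero digits,
and `N = Σ dᵢ · F_{i+2}`. -/
def IsZeck (N : ℕ) (d : ℕ → ℕ) : Prop :=
  (∀ i, d i ≤ 1) ∧ (∀ i, ¬(d i = 1 ∧ d (i + 1) = 1)) ∧
  (Function.support d).Finite ∧ N = ∑ᶠ i, d i * Nat.fib (i + 2)

/-! Put `v m = (A m, m)`. From `φ² = φ + 1` and the irrationality of `φ` one gets, for `m ≥ 1`,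
`A (A m) = A m + m - 1`, `B m = A m + m` and `A (B m) = 2 A m + m`, that is
`v (A m) = M v m - (1, 0)` and `v (B m) = M² v m` with `M = !![1, 1; 1, 0]`. Hence for a composition
`U` with `i` letters `A` and `j` letters `B`, `v (U n) = Mᵏ v n - c` with `k = i + 2 j`, and
`Mᵏ = !![F (k+1), F k; F k, F (k-1)]`; the second coordinate is the theorem. -/

open Real goldenRatio

lemma phi_eq_goldenRatio : phi = φ := rfl

lemma A_eq_floor (n : ℕ) : (A n : ℤ) = ⌊(n : ℝ) * φ⌋ :=
  Int.toNat_of_nonneg (Int.floor_nonneg.mpr (mul_nonneg n.cast_nonneg goldenRatio_pos.le))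

lemma one_le_A {n : ℕ} (hn : 1 ≤ n) : 1 ≤ A n := by
  have h : (1 : ℤ) ≤ ⌊(n : ℝ) * φ⌋ := by
    rw [Int.le_floor, Int.cast_one]
    have : (1 : ℝ) ≤ n := by exact_mod_cast hn
    nlinarith [one_lt_goldenRatio]
  have := A_eq_floor n
  omega

lemma B_eq_A_add (n : ℕ) : B n = A n + n := by
  have h : (n : ℝ) * φ ^ 2 = n * φ + n := by rw [goldenRatio_sq]; ring
  rw [B, phi_eq_goldenRatio, h, Int.floor_add_natCast, ← A_eq_floor]
  exact_mod_cast Int.toNat_natCast (A n + n)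

lemma one_le_B {n : ℕ} (hn : 1 ≤ n) : 1 ≤ B n := by
  rw [B_eq_A_add]
  have := one_le_A hn
  omega

lemma A_eq_sub_fract (m : ℕ) : (A m : ℝ) = m * φ - Int.fract ((m : ℝ) * φ) := by
  rw [Int.self_sub_fract, ← A_eq_floor]
  norm_cast

lemma A_mul_goldenRatio (m : ℕ) :
    (A m : ℝ) * φ = A m + m - Int.fract ((m : ℝ) * φ) * (φ - 1) := by
  rw [A_eq_sub_fract]
  linear_combination (m : ℝ) * goldenRatio_sq

lemma A_A {m : ℕ} (hm : 1 ≤ m) : (A (A m) : ℤ) = A m + m - 1 := by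
  have hθ : 0 < Int.fract ((m : ℝ) * φ) := by
    rw [Int.fract_pos]
    exact (goldenRatio_irrational.natCast_mul (by omega)).ne_int _
  have hθ1 := Int.fract_lt_one ((m : ℝ) * φ)
  rw [A_eq_floor, A_mul_goldenRatio, Int.floor_eq_iff]
  push_cast
  constructor <;> nlinarith [one_lt_goldenRatio, goldenRatio_lt_two]

lemma A_B (m : ℕ) : A (B m) = 2 * A m + m := by
  have hθ := Int.fract_nonneg ((m : ℝ) * φ)
  have hθ1 := Int.fract_lt_one ((m : ℝ) * φ)
  have hA := A_eq_sub_fract m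
  zify
  rw [A_eq_floor, B_eq_A_add, Nat.cast_add, add_mul, A_mul_goldenRatio, Int.floor_eq_iff]
  push_cast
  constructor <;> nlinarith [one_lt_goldenRatio, goldenRatio_lt_two]

/-- `(A (f n), f n) = Mᵏ (A n, n) - (mu, lam)` for `n ≥ 1`; as `Int.fib (-1) = 1`, the induction can
start at `k = 0`, `f = id`. -/
def IsFibAffine (k : ℤ) (f : ℕ → ℕ) : Prop :=
  ∃ lam mu : ℤ, ∀ n, 1 ≤ n → 1 ≤ f n ∧
    (f n : ℤ) = Int.fib k * A n + Int.fib (k - 1) * n - lam ∧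
    (A (f n) : ℤ) = Int.fib (k + 1) * A n + Int.fib k * n - mu

lemma isFibAffine_id : IsFibAffine 0 id :=
  ⟨0, 0, fun n hn => ⟨hn, by simp, by simp⟩⟩

namespace IsFibAffine

variable {k : ℤ} {f : ℕ → ℕ}

lemma A_comp (hf : IsFibAffine k f) : IsFibAffine (k + 1) (A ∘ f) := by
  obtain ⟨lam, mu, hf⟩ := hf
  refine ⟨mu, mu + lam + 1, fun n hn => ?_⟩
  obtain ⟨hpos, hfn, hAfn⟩ := hf n hn
  refine ⟨one_le_A hpos, by simpa using hAfn, ?_⟩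
  have h1 := Int.fib_add_two (k - 1)
  have h2 := Int.fib_add_two k
  rw [Function.comp_apply, A_A hpos, hAfn, hfn]
  ring_nf at h1 h2 ⊢
  linear_combination -(A n : ℤ) * h2 - (n : ℤ) * h1

lemma B_comp (hf : IsFibAffine k f) : IsFibAffine (k + 2) (B ∘ f) := by
  obtain ⟨lam, mu, hf⟩ := hf
  refine ⟨mu + lam, 2 * mu + lam, fun n hn => ?_⟩
  obtain ⟨hpos, hfn, hAfn⟩ := hf n hn
  have h1 := Int.fib_add_two (k - 1)
  have h2 := Int.fib_add_two k
  have h3 := Int.fib_add_two (k + 1)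
  refine ⟨one_le_B hpos, ?_, ?_⟩
  · rw [Function.comp_apply, B_eq_A_add, Nat.cast_add, hAfn, hfn]
    ring_nf at h1 h2 h3 ⊢
    linear_combination -(A n : ℤ) * h2 - (n : ℤ) * h1
  · rw [Function.comp_apply, A_B, Nat.cast_add, Nat.cast_mul, hAfn, hfn]
    ring_nf at h1 h2 h3 ⊢
    linear_combination -(A n : ℤ) * (h3 + h2) - (n : ℤ) * (h2 + h1)

end IsFibAffine

lemma isFibAffine_foldr (l : List Bool) :
    IsFibAffine ((l.count false + 2 * l.count true : ℕ) : ℤ)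
      (l.foldr (fun b f => (if b then B else A) ∘ f) id) := by
  induction l with
  | nil => exact isFibAffine_id
  | cons b t ih =>
    cases b
    · convert ih.A_comp using 1
      · simp only [List.count_cons_self, ne_eq, Bool.false_eq_true, not_false_eq_true,
          List.count_cons_of_ne, Nat.cast_add, Nat.cast_one, Nat.cast_mul, Nat.cast_ofNat]
        ring
      · rfl
    · convert ih.B_comp using 1
      · simp only [ne_eq, Bool.true_eq_false, not_false_eq_true, List.count_cons_of_ne,
          List.count_cons_self, Nat.cast_add, Nat.cast_mul, Nat.cast_ofNat, Nat.cast_one]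
        ring
      · rfl

lemma one_le_count_false_add_two_mul_count_true {l : List Bool} (hl : l ≠ []) :
    1 ≤ l.count false + 2 * l.count true := by
  obtain ⟨b, t, rfl⟩ := List.exists_cons_of_ne_nil hl
  cases b <;> simp <;> omega

/-- Carlitz–Scoville–Hoggatt: any composition of the Wythoff functions A and B,
with i occurrences of A () and j occurrences of B (), equals
F_{i+2j}·A(n) + F_{i+2j-1}·n − λ for some integer constant λ. -/
theorem carlitz_scoville_hoggatt (l : List Bool) (hl : l ≠ []) :
    ∃ lam : ℤ, ∀ n : ℕ, 1 ≤ n →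
      ((l.foldr (fun b f => (if b then B else A) ∘ f) (id : ℕ → ℕ)) n : ℤ) =
        Nat.fib (l.count false + 2 * l.count true) * (A n : ℤ) +
          Nat.fib (l.count false + 2 * l.count true - 1) * (n : ℤ) - lam := by
  obtain ⟨lam, _, h⟩ := isFibAffine_foldr l
  refine ⟨lam, fun n hn => ?_⟩
  have hk := one_le_count_false_add_two_mul_count_true hl
  rw [(h n hn).2.1, ← Nat.cast_pred (R := ℤ) hk]
  rfl
end

section
/- For all m ≥ 1 and n ≥ 1, B^m(A(n)) = F_{2m+1}·A(n) + F_{2m}·n − F_{2m}, where A(n) = ⌊nφ⌋ and B(n) = ⌊nφ²⌋. -/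
/-!
Since `φ² = φ + 1`, `B k = k + A k`. From `F_{k+1} - φ F_k = ψ^k` one gets, for `a = A n` and
`b = n - 1`, `(F_{k+1} a + F_k b) φ = F_{k+2} a + F_{k+1} b + ψ^k (1 + ψ {nφ})`. For even `k`
the error term lies in `(0, 1)` because `-1 < ψ < 0` and `0 < {nφ} < 1` (`φ` is irrational), so
`A (F_{k+1} a + F_k b) = F_{k+2} a + F_{k+1} b`. Hence applying `B` to
`F_{2m+1} a + F_{2m} b` yields `F_{2m+3} a + F_{2m+2} b`, and induction on `m` gives
`B^[m] (A n) = F_{2m+1} A n + F_{2m} (n - 1)`.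
-/

open Real
open scoped goldenRatio

lemma A_eq_natFloor (n : ℕ) : A n = ⌊(n : ℝ) * φ⌋₊ := Int.floor_toNat _

lemma B_eq_natFloor (n : ℕ) : B n = ⌊(n : ℝ) * φ ^ 2⌋₊ := Int.floor_toNat _

lemma B_eq_add_A (k : ℕ) : B k = k + A k := by
  rw [B_eq_natFloor, A_eq_natFloor, goldenRatio_sq, mul_add, mul_one,
    Nat.floor_add_natCast (by positivity), add_comm]

lemma natCast_A (n : ℕ) : (A n : ℝ) = n * φ - Int.fract (n * φ) := by
  rw [A_eq_natFloor, natCast_floor_eq_intCast_floor (by positivity), Int.self_sub_fract]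

lemma goldenConj_mul_A_add_self (n : ℕ) : ψ * A n + n = -ψ * Int.fract (n * φ) := by
  rw [natCast_A]
  linear_combination (n : ℝ) * goldenRatio_mul_goldenConj

lemma A_eq_of_mul_goldenRatio_eq {k N : ℕ} {ε : ℝ} (h : k * φ = N + ε) (hε₀ : 0 ≤ ε)
    (hε₁ : ε < 1) : A k = N := by
  rw [A_eq_natFloor, Nat.floor_eq_iff (by positivity), h]
  constructor <;> linarith

lemma fract_natCast_mul_goldenRatio_pos {n : ℕ} (hn : n ≠ 0) : 0 < Int.fract (n * φ) :=
  Int.fract_pos.mpr ((goldenRatio_irrational.natCast_mul hn).ne_int _)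

lemma fib_combination_mul_goldenRatio (k a b : ℕ) :
    ((Nat.fib (k + 1) * a + Nat.fib k * b : ℕ) : ℝ) * φ =
      Nat.fib (k + 2) * a + Nat.fib (k + 1) * b - ψ ^ k * (ψ * a + b) := by
  push_cast
  linear_combination (-(a : ℝ)) * fib_succ_sub_goldenRatio_mul_fib (k + 1) -
    (b : ℝ) * fib_succ_sub_goldenRatio_mul_fib k

lemma A_fib_combination_A {n : ℕ} (hn : 1 ≤ n) {k : ℕ} (hk : Even k) :
    A (Nat.fib (k + 1) * A n + Nat.fib k * (n - 1)) =
      Nat.fib (k + 2) * A n + Nat.fib (k + 1) * (n - 1) := by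
  have hf₀ : 0 < Int.fract ((n : ℝ) * φ) :=
    fract_natCast_mul_goldenRatio_pos (Nat.pos_iff_ne_zero.mp hn)
  have hf₁ : Int.fract ((n : ℝ) * φ) < 1 := Int.fract_lt_one _
  have hψ₀ : ψ < 0 := goldenConj_neg
  have hψ₁ : -1 < ψ := neg_one_lt_goldenConj
  have hψpow₀ : 0 < ψ ^ k := hk.pow_pos goldenConj_ne_zero
  have hψpow₁ : ψ ^ k ≤ 1 := by
    rw [← hk.pow_abs]
    exact pow_le_one₀ (abs_nonneg ψ) (abs_le.mpr ⟨hψ₁.le, by linarith⟩)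
  have hfac₀ : 0 < 1 + ψ * Int.fract ((n : ℝ) * φ) := by nlinarith
  have hfac₁ : 1 + ψ * Int.fract ((n : ℝ) * φ) < 1 := by nlinarith
  refine A_eq_of_mul_goldenRatio_eq (ε := ψ ^ k * (1 + ψ * Int.fract ((n : ℝ) * φ)))
    ?_ (by positivity) (by nlinarith)
  rw [fib_combination_mul_goldenRatio]
  push_cast [Nat.cast_sub hn]
  linear_combination -ψ ^ k * goldenConj_mul_A_add_self n

lemma iterate_B_A (n : ℕ) (hn : 1 ≤ n) (m : ℕ) :
    B^[m] (A n) = Nat.fib (2 * m + 1) * A n + Nat.fib (2 * m) * (n - 1) := by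
  induction m with
  | zero => simp
  | succ m ih =>
    have hfib₁ : Nat.fib (2 * (m + 1) + 1) = Nat.fib (2 * m + 1) + Nat.fib (2 * m + 2) :=
      Nat.fib_add_two
    have hfib₀ : Nat.fib (2 * (m + 1)) = Nat.fib (2 * m) + Nat.fib (2 * m + 1) := Nat.fib_add_two
    rw [Function.iterate_succ_apply', ih, B_eq_add_A, A_fib_combination_A hn (even_two_mul m), hfib₁, hfib₀]
    ring

theorem iterate_B_A_formula_general (m n : ℕ) (hn : 1 ≤ n) :
    (B^[m] (A n) : ℤ) =
      Nat.fib (2 * m + 1) * (A n : ℤ) + Nat.fib (2 * m) * (n : ℤ) - Nat.fib (2 * m) := by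
  rw [iterate_B_A n hn m]
  push_cast [Nat.cast_sub hn]
  ring

/-- B^m(A(n)) = F_{2m+1}·A(n) + F_{2m}·n − F_{2m} for m, n ≥ 1. -/
theorem iterate_B_A_formula (m n : ℕ) (hm : 1 ≤ m) (hn : 1 ≤ n) :
    (B^[m] (A n) : ℤ) =
      Nat.fib (2 * m + 1) * (A n : ℤ) + Nat.fib (2 * m) * (n : ℤ) - Nat.fib (2 * m) :=
  iterate_B_A_formula_general m n hn
end

section
/- For every m ≥ 1, the set of natural numbers N whose Zeckendorf expansion ends in m zeros (i.e., d_0 = d_1 = ... = d_{m−1} = 0) is exactly {A^m(n) − 1 : n ≥ 1}, where A^m is the m-fold iterate of the lower Wythoff function A(n) = ⌊nφ⌋. -/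
open Finset Function Real goldenRatio

lemma isZeck_of_isZeckendorfRep {l : List ℕ} (hl : l.IsZeckendorfRep) :
    IsZeck (l.map Nat.fib).sum (fun i => if i + 2 ∈ l then 1 else 0) := by
  have : Trans (fun a b : ℕ => b + 2 ≤ a) (fun a b => b + 2 ≤ a) (fun a b => b + 2 ≤ a) :=
    ⟨fun h₁ h₂ => by omega⟩
  obtain ⟨hgap, -, hge⟩ := List.pairwise_append.1 (List.isChain_iff_pairwise.1 hl)
  have hge : ∀ a ∈ l, 2 ≤ a := fun a ha => by simpa using hge a ha 0 (by simp)
  have : Std.Symm fun a b : ℕ => a + 2 ≤ b ∨ b + 2 ≤ a := ⟨fun _ _ => Or.symm⟩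
  have hsep : l.Pairwise fun a b : ℕ => a + 2 ≤ b ∨ b + 2 ≤ a := hgap.imp Or.inr
  have hsupp : support (fun i => if i + 2 ∈ l then 1 else 0) ⊆
      ↑(l.toFinset.image (· - 2)) := by
    intro i hi
    simp only [mem_support, ne_eq, ite_eq_right_iff, Classical.not_imp] at hi
    simp only [coe_image, List.coe_toFinset, Set.mem_image]
    exact ⟨i + 2, hi.1, by omega⟩
  refine ⟨fun i => by dsimp only; split_ifs <;> simp, fun i h => ?_,
    (Finset.finite_toSet _).subset hsupp, ?_⟩
  · simp only [ite_eq_left_iff, zero_ne_one, imp_false, not_not] at h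
    have := hsep.forall h.1 h.2 (by omega)
    omega
  · rw [finsum_eq_sum_of_support_subset _ ((support_mul_subset_left _ _).trans hsupp),
      ← List.sum_toFinset _ (hgap.imp (by omega)), sum_image]
    · refine sum_congr rfl fun a ha => ?_
      rw [List.mem_toFinset] at ha
      rw [Nat.sub_add_cancel (hge a ha), if_pos ha, one_mul]
    · intro a ha b hb hab
      simp only [mem_coe, List.mem_toFinset] at ha hb
      dsimp only at hab
      have := hge a ha; have := hge b hb
      omega

lemma exists_isZeck (N : ℕ) : ∃ d, IsZeck N d :=
  ⟨_, by simpa using isZeck_of_isZeckendorfRep (Nat.isZeckendorfRep_zeckendorf N)⟩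

/-- The bounds are the sums of the negative, resp. positive, terms of `∑ ψ ^ (i + 2)`. -/
lemma sum_mul_goldenConj_pow_mem_Ioo {e : ℕ → ℝ} (he₀ : ∀ i, 0 ≤ e i) (he₁ : ∀ i, e i ≤ 1)
    (K : ℕ) : ∑ i ∈ range K, e i * ψ ^ (i + 2) ∈ Set.Ioo (-ψ ^ 2) (-ψ) := by
  have hψ := goldenConj_neg
  induction K generalizing e with
  | zero =>
    rw [sum_range_zero]
    exact ⟨by nlinarith, by linarith⟩
  | succ K ih =>
    obtain ⟨hlo, hhi⟩ := ih (fun i => he₀ (i + 1)) (fun i => he₁ (i + 1))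
    set S := ∑ i ∈ range K, e (i + 1) * ψ ^ (i + 2)
    have hS : ∑ i ∈ range K, e (i + 1) * ψ ^ (i + 1 + 2) = ψ * S := by
      rw [mul_sum]; exact sum_congr rfl fun i _ => by ring
    rw [sum_range_succ', hS, zero_add]
    have hψ3 : ψ ^ 3 = ψ ^ 2 + ψ := by linear_combination ψ * goldenConj_sq
    have h₀ := mul_nonneg (he₀ 0) (sq_nonneg ψ)
    have h₁ := mul_le_mul_of_nonneg_right (he₁ 0) (sq_nonneg ψ)
    constructor
    · nlinarith [mul_pos_of_neg_of_neg hψ (sub_neg.2 hhi)]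
    · nlinarith [mul_neg_of_neg_of_pos hψ (sub_pos.2 hlo)]

lemma cast_sum_fib_mul_goldenRatio (d : ℕ → ℕ) (K : ℕ) :
    ((∑ i ∈ range K, d i * Nat.fib (i + 2) : ℕ) : ℝ) * φ =
      (∑ i ∈ range K, d i * Nat.fib (i + 3) : ℕ) - ∑ i ∈ range K, (d i : ℝ) * ψ ^ (i + 2) := by
  push_cast
  rw [sum_mul, ← sum_sub_distrib]
  refine sum_congr rfl fun i _ => ?_
  rw [← fib_succ_sub_goldenRatio_mul_fib]
  ring

lemma A_eq_of_le_of_lt {n k : ℕ} (h₁ : (k : ℝ) ≤ n * φ) (h₂ : n * φ < k + 1) : A n = k := by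
  rw [A, phi, ← goldenRatio, show ⌊(n : ℝ) * φ⌋ = k from Int.floor_eq_iff.2 ⟨h₁, h₂⟩]
  rfl

lemma A_sum_fib_add_one {d : ℕ → ℕ} (hd : ∀ i, d i ≤ 1) (K : ℕ) :
    A (∑ i ∈ range K, d i * Nat.fib (i + 2) + 1) = ∑ i ∈ range K, d i * Nat.fib (i + 3) + 1 := by
  obtain ⟨hlo, hhi⟩ := sum_mul_goldenConj_pow_mem_Ioo (fun i => Nat.cast_nonneg (d i))
    (fun i => by exact_mod_cast hd i) K
  have hφ : φ = 1 - ψ := one_sub_goldenRatio.symm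
  apply A_eq_of_le_of_lt <;>
  · rw [Nat.cast_add, Nat.cast_add, Nat.cast_one, add_mul, one_mul, cast_sum_fib_mul_goldenRatio]
    linarith [goldenConj_sq]

lemma IsZeck.A_add_one {n : ℕ} {d : ℕ → ℕ} (h : IsZeck n d) :
    A (n + 1) = ∑ᶠ i, d i * Nat.fib (i + 3) + 1 := by
  obtain ⟨hd, -, hfin, rfl⟩ := h
  obtain ⟨K, hK⟩ := hfin.toFinset.exists_nat_subset_range
  have hsupp : support d ⊆ ↑(range K) := fun i hi => hK (hfin.mem_toFinset.2 hi)
  simp only [finsum_eq_sum_of_support_subset _ ((support_mul_subset_left _ _).trans hsupp)]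
  exact A_sum_fib_add_one hd K

lemma le_A (n : ℕ) : n ≤ A n := by
  have : (n : ℝ) ≤ n * φ := le_mul_of_one_le_right n.cast_nonneg one_lt_goldenRatio.le
  rw [A, phi, ← goldenRatio, Int.le_toNat (Int.floor_nonneg.2 (by positivity)), Int.le_floor]
  exact_mod_cast this

lemma le_iterate_A (m n : ℕ) : n ≤ A^[m] n :=
  id_le_iterate_of_id_le le_A m n

def prependZero (e : ℕ → ℕ) : ℕ → ℕ
  | 0 => 0
  | i + 1 => e i

lemma eq_prependZero {d : ℕ → ℕ} (h : d 0 = 0) : d = prependZero (fun i => d (i + 1)) := by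
  funext i
  cases i <;> simp [prependZero, h]

lemma support_prependZero (e : ℕ → ℕ) : support (prependZero e) = Nat.succ '' support e := by
  ext i
  cases i <;> simp [prependZero]

lemma finsum_eq_finsum_add_one {M : Type*} [AddCommMonoid M] {f : ℕ → M} (h : f 0 = 0) :
    ∑ᶠ i, f i = ∑ᶠ i, f (i + 1) := by
  rw [← finsum_mem_range Nat.succ_injective, ← finsum_mem_univ]
  refine finsum_mem_inter_support_eq' _ _ _ fun i hi => ?_
  cases i
  · exact absurd h hi
  · simp

lemma isZeck_prependZero_iff {N : ℕ} {e : ℕ → ℕ} :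
    IsZeck N (prependZero e) ↔ ∃ n, IsZeck n e ∧ N + 1 = A (n + 1) := by
  have hle : (∀ i, prependZero e i ≤ 1) ↔ ∀ i, e i ≤ 1 :=
    ⟨fun h i => h (i + 1), fun h i => by cases i <;> simp [prependZero, h]⟩
  have hsep : (∀ i, ¬(prependZero e i = 1 ∧ prependZero e (i + 1) = 1)) ↔
      ∀ i, ¬(e i = 1 ∧ e (i + 1) = 1) :=
    ⟨fun h i => h (i + 1), fun h i => by cases i <;> simp [prependZero, h _]⟩
  have hfin : (support (prependZero e)).Finite ↔ (support e).Finite := by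
    rw [support_prependZero, Set.finite_image_iff Nat.succ_injective.injOn]
  have hsum : ∑ᶠ i, prependZero e i * Nat.fib (i + 2) = ∑ᶠ i, e i * Nat.fib (i + 3) :=
    finsum_eq_finsum_add_one (zero_mul _)
  constructor
  · rintro ⟨h₁, h₂, h₃, rfl⟩
    have he : IsZeck _ e := ⟨hle.1 h₁, hsep.1 h₂, hfin.1 h₃, rfl⟩
    exact ⟨_, he, by rw [he.A_add_one, hsum]⟩
  · rintro ⟨n, he, hN⟩
    refine ⟨hle.2 he.1, hsep.2 he.2.1, hfin.2 he.2.2.1, ?_⟩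
    rw [hsum]
    have := he.A_add_one
    omega

lemma exists_isZeck_zeros_add_one_iff {m N : ℕ} :
    (∃ d, IsZeck N d ∧ ∀ i, i < m + 1 → d i = 0) ↔
      ∃ n, (∃ e, IsZeck n e ∧ ∀ i, i < m → e i = 0) ∧ N + 1 = A (n + 1) := by
  constructor
  · rintro ⟨d, hd, hz⟩
    rw [eq_prependZero (hz 0 m.succ_pos), isZeck_prependZero_iff] at hd
    obtain ⟨n, he, hN⟩ := hd
    exact ⟨n, ⟨_, he, fun i hi => hz (i + 1) (by omega)⟩, hN⟩
  · rintro ⟨n, ⟨e, he, hz⟩, hN⟩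
    refine ⟨prependZero e, isZeck_prependZero_iff.2 ⟨n, he, hN⟩, fun i hi => ?_⟩
    cases i
    · rfl
    · exact hz _ (by omega)

theorem zeck_ends_in_zeros_general (m : ℕ) (N : ℕ) :
    (∃ d : ℕ → ℕ, IsZeck N d ∧ ∀ i, i < m → d i = 0) ↔
      ∃ n : ℕ, 1 ≤ n ∧ N = A^[m] n - 1 := by
  induction m generalizing N with
  | zero =>
    obtain ⟨d, hd⟩ := exists_isZeck N
    exact ⟨fun _ => ⟨N + 1, by omega, rfl⟩, fun _ => ⟨d, hd, by omega⟩⟩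
  | succ m ih =>
    simp only [exists_isZeck_zeros_add_one_iff, ih]
    constructor
    · rintro ⟨_, ⟨k, hk, rfl⟩, hN⟩
      rw [Nat.sub_add_cancel (hk.trans (le_iterate_A m k))] at hN
      exact ⟨k, hk, by rw [iterate_succ_apply', ← hN, Nat.add_sub_cancel]⟩
    · rintro ⟨k, hk, rfl⟩
      refine ⟨_, ⟨k, hk, rfl⟩, ?_⟩
      rw [Nat.sub_add_cancel (hk.trans (le_iterate_A m k)),
        Nat.sub_add_cancel (hk.trans (le_iterate_A (m + 1) k)), iterate_succ_apply']

/-- For m ≥ 1, the numbers whose Zeckendorf expansion ends in m zeros are exactly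
the numbers A^m(n) − 1, n ≥ 1. -/
theorem zeck_ends_in_zeros (m : ℕ) (hm : 1 ≤ m) (N : ℕ) :
    (∃ d : ℕ → ℕ, IsZeck N d ∧ ∀ i, i < m → d i = 0) ↔
      ∃ n : ℕ, 1 ≤ n ∧ N = A^[m] n - 1 :=
  zeck_ends_in_zeros_general m N
end
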